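/- arXiv:2408.10078 — 6 statements merged into one kernel-verified Lean document; each statement's English description precedes it below -/
import Mathlib

section
/- Let N ∈ ℕ and let M ∈ ℝ^{N×N} be a matrix such that every row of M has the same sum m, i.e. Σ_{j=1}^N M_{ij} = m for every i = 1,…,N. Then for every vector y ∈ ℝ^N one has diam(M y) ≤ (m − erg(M)) · diam(y). -/
noncomputable section

/-- The diameter of a vector `y ∈ ℝ^N`: `max_i y_i - min_i y_i`. -/
def vdiam {N : ℕ} (y : Fin N → ℝ) : ℝ := (⨆ i, y i) - (⨅ i, y i)

/-- The ergodicity coefficient of a matrix `M ∈ ℝ^{N×N}`: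
`erg(M) = min_{i,l} Σ_j min{M i j, M l j}`. -/
def erg {N : ℕ} (M : Matrix (Fin N) (Fin N) ℝ) : ℝ :=
  ⨅ i, ⨅ l, ∑ j, min (M i j) (M l j)

/-- If every row of `M` sums to `m`, then `diam(M y) ≤ (m - erg M) * diam y`. -/
theorem stmt0 {N : ℕ} (hN : 1 ≤ N) (M : Matrix (Fin N) (Fin N) ℝ) (m : ℝ)
    (hrow : ∀ i, ∑ j, M i j = m) (y : Fin N → ℝ) :
    vdiam (M.mulVec y) ≤ (m - erg M) * vdiam y := by
  haveI : Nonempty (Fin N) := Fin.pos_iff_nonempty.mp hN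
  obtain ⟨i, hi⟩ := Finite.exists_max (M.mulVec y)
  obtain ⟨l, hl⟩ := Finite.exists_min (M.mulVec y)
  set P := ⨆ j, y j with hP
  set Q := ⨅ j, y j with hQ
  have hyP : ∀ j, y j ≤ P := fun j => le_ciSup (Set.finite_range y).bddAbove j
  have hyQ : ∀ j, Q ≤ y j := fun j => ciInf_le (Set.finite_range y).bddBelow j
  have hPQ : 0 ≤ P - Q := by
    have h1 := hyQ (Classical.arbitrary _)
    have h2 := hyP (Classical.arbitrary (Fin N))
    linarith
  set s := ∑ j, min (M i j) (M l j) with hs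
  have herg : erg M ≤ s := by
    calc erg M ≤ ⨅ l', ∑ j, min (M i j) (M l' j) :=
          ciInf_le (Set.finite_range _).bddBelow i
      _ ≤ s := ciInf_le (Set.finite_range _).bddBelow l
  have hc : ∀ j, 0 ≤ M i j - min (M i j) (M l j) :=
    fun j => sub_nonneg.mpr (min_le_left _ _)
  have hd : ∀ j, 0 ≤ M l j - min (M i j) (M l j) :=
    fun j => sub_nonneg.mpr (min_le_right _ _)
  have hsumc : ∑ j, (M i j - min (M i j) (M l j)) = m - s := by
    rw [Finset.sum_sub_distrib, hrow, hs]
  have hsumd : ∑ j, (M l j - min (M i j) (M l j)) = m - s := by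
    rw [Finset.sum_sub_distrib, hrow, hs]
  have key : M.mulVec y i - M.mulVec y l ≤ (m - s) * (P - Q) := by
    have e1 : M.mulVec y i - M.mulVec y l
        = ∑ j, ((M i j - min (M i j) (M l j)) * y j
            - (M l j - min (M i j) (M l j)) * y j) := by
      simp only [Matrix.mulVec, dotProduct, ← Finset.sum_sub_distrib]
      apply Finset.sum_congr rfl
      intro j _
      ring
    rw [e1]
    have e2 : ∑ j, ((M i j - min (M i j) (M l j)) * y j
            - (M l j - min (M i j) (M l j)) * y j)
        ≤ ∑ j, ((M i j - min (M i j) (M l j)) * P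
            - (M l j - min (M i j) (M l j)) * Q) := by
      apply Finset.sum_le_sum
      intro j _
      have h1 : (M i j - min (M i j) (M l j)) * y j
          ≤ (M i j - min (M i j) (M l j)) * P :=
        mul_le_mul_of_nonneg_left (hyP j) (hc j)
      have h2 : (M l j - min (M i j) (M l j)) * Q
          ≤ (M l j - min (M i j) (M l j)) * y j :=
        mul_le_mul_of_nonneg_left (hyQ j) (hd j)
      linarith
    calc _ ≤ _ := e2
      _ = (m - s) * (P - Q) := by
        rw [Finset.sum_sub_distrib, ← Finset.sum_mul, ← Finset.sum_mul,
          hsumc, hsumd]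
        ring
  have hdiam : vdiam (M.mulVec y) ≤ M.mulVec y i - M.mulVec y l := by
    unfold vdiam
    have h1 : (⨆ j, M.mulVec y j) ≤ M.mulVec y i := ciSup_le hi
    have h2 : M.mulVec y l ≤ ⨅ j, M.mulVec y j := le_ciInf hl
    linarith
  have hfinal : (m - s) * (P - Q) ≤ (m - erg M) * (P - Q) := by
    apply mul_le_mul_of_nonneg_right _ hPQ
    linarith
  calc vdiam (M.mulVec y) ≤ M.mulVec y i - M.mulVec y l := hdiam
    _ ≤ (m - s) * (P - Q) := key
    _ ≤ (m - erg M) * (P - Q) := hfinal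
    _ = (m - erg M) * vdiam y := by rw [vdiam]
end
end

section
/- Let N ∈ ℕ, γ ∈ (0,1), let v ∈ ℝ^N be a weight vector with v_j > 0 for all j and Σ_{j=1}^N v_j = 1, let V ∈ ℝ^{N×N} be the matrix all of whose rows equal v, let η ∈ ℝ^N, let D = diag(η_1,…,η_N), and set M = (1−γ)I_N + γV − D(I_N − V). Then every row of M sums to 1, and erg(M) ≥ γ − 4 max_{i=1:N} |η_i|. -/
noncomputable section

private lemma min_half_aux {a b : ℝ} : min a b = (a + b - |a - b|) / 2 := by
  rcases le_total a b with h | h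
  · rw [min_eq_left h, abs_of_nonpos (by linarith)]; ring
  · rw [min_eq_right h, abs_of_nonneg (by linarith)]; ring

/-- For `M = (1-γ)I_N + γV - D(I_N - V)`, where `V` has all rows equal to a probability
weight vector `v` and `D = diag(η)`, every row of `M` sums to `1` and
`erg(M) ≥ γ - 4 max_i |η_i|`. -/
theorem stmt2 {N : ℕ} (hN : 1 ≤ N) (γ : ℝ) (hγ : γ ∈ Set.Ioo (0:ℝ) 1)
    (v : Fin N → ℝ) (hv : ∀ j, 0 < v j) (hvsum : ∑ j, v j = 1)
    (η : Fin N → ℝ)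
    (V : Matrix (Fin N) (Fin N) ℝ) (hV : ∀ i j, V i j = v j)
    (D : Matrix (Fin N) (Fin N) ℝ) (hD : D = Matrix.diagonal η)
    (M : Matrix (Fin N) (Fin N) ℝ)
    (hM : M = (1 - γ) • (1 : Matrix (Fin N) (Fin N) ℝ) + γ • V - D * (1 - V)) :
    (∀ i, ∑ j, M i j = 1) ∧ erg M ≥ γ - 4 * ⨆ i, |η i| := by
  obtain ⟨hγ0, hγ1⟩ := hγ
  haveI hNE : Nonempty (Fin N) := Fin.pos_iff_nonempty.mp hN
  have hEb : ∀ i, |η i| ≤ ⨆ i, |η i| := fun i =>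
    le_ciSup (f := fun i => |η i|) (Set.Finite.bddAbove (Set.finite_range _)) i
  set E := ⨆ i, |η i| with hEdef
  have hE0 : 0 ≤ E := le_trans (abs_nonneg _) (hEb (Classical.arbitrary _))
  have hMij : ∀ i j, M i j = (if i = j then (1 - γ) - η i else 0) + (γ + η i) * v j := by
    intro i j
    subst hM hD
    simp only [Matrix.sub_apply, Matrix.add_apply, Matrix.smul_apply, Matrix.one_apply,
      Matrix.diagonal_mul, hV, smul_eq_mul]
    split <;> ring
  have hrow : ∀ i, ∑ j, M i j = 1 := by
    intro i
    simp only [hMij]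
    rw [Finset.sum_add_distrib, ← Finset.mul_sum, hvsum, Finset.sum_ite_eq]
    simp
  refine ⟨hrow, ?_⟩
  have key : ∀ i l, γ - 4 * E ≤ ∑ j, min (M i j) (M l j) := by
    intro i l
    have hpt : ∀ j, |M i j - M l j| ≤
        (if i = j then (1 - γ) + E else 0) +
          ((if l = j then (1 - γ) + E else 0) + 2 * E * v j) := by
      intro j
      rw [hMij i j, hMij l j]
      have e1 : (if i = j then (1 - γ) - η i else 0) + (γ + η i) * v j
          - ((if l = j then (1 - γ) - η l else 0) + (γ + η l) * v j)
          = (if i = j then (1 - γ) - η i else 0) - (if l = j then (1 - γ) - η l else 0)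
            + (η i - η l) * v j := by ring
      rw [e1]
      have h1 : |(if i = j then (1 - γ) - η i else 0)| ≤ (if i = j then (1 - γ) + E else 0) := by
        split
        · have := abs_le.mp (hEb i)
          rw [abs_le]; constructor <;> linarith
        · simp
      have h2 : |(if l = j then (1 - γ) - η l else 0)| ≤ (if l = j then (1 - γ) + E else 0) := by
        split
        · have := abs_le.mp (hEb l)
          rw [abs_le]; constructor <;> linarith
        · simp
      have h3 : |(η i - η l) * v j| ≤ 2 * E * v j := by
        rw [abs_mul, abs_of_pos (hv j)]
        have hd : |η i - η l| ≤ 2 * E := by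
          have := hEb i; have := hEb l
          calc |η i - η l| ≤ |η i| + |η l| := abs_sub _ _
            _ ≤ 2 * E := by linarith
        exact mul_le_mul_of_nonneg_right hd (le_of_lt (hv j))
      have h4 := abs_add_le ((if i = j then (1 - γ) - η i else 0)
        - (if l = j then (1 - γ) - η l else 0)) ((η i - η l) * v j)
      have h5 := abs_sub (if i = j then (1 - γ) - η i else 0)
        (if l = j then (1 - γ) - η l else 0)
      linarith
    have hS : ∑ j, |M i j - M l j| ≤ 2 * (1 - γ) + 4 * E := by
      calc ∑ j, |M i j - M l j|
          ≤ ∑ j, ((if i = j then (1 - γ) + E else 0) +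
              ((if l = j then (1 - γ) + E else 0) + 2 * E * v j)) :=
            Finset.sum_le_sum fun j _ => hpt j
        _ = 2 * (1 - γ) + 4 * E := by
            rw [Finset.sum_add_distrib, Finset.sum_add_distrib, ← Finset.mul_sum, hvsum,
              Finset.sum_ite_eq, Finset.sum_ite_eq]
            simp
            ring
    have hmin : ∑ j, min (M i j) (M l j)
        = (∑ j, M i j + ∑ j, M l j - ∑ j, |M i j - M l j|) / 2 := by
      simp_rw [min_half_aux]
      rw [← Finset.sum_div, Finset.sum_sub_distrib, Finset.sum_add_distrib]
    rw [hmin, hrow i, hrow l]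
    linarith
  rw [ge_iff_le]
  unfold erg
  exact le_ciInf fun i => le_ciInf fun l => key i l
end
end

section
/- Let N ∈ ℕ, γ ∈ (0,1), let v ∈ ℝ^N be a weight vector with v_j > 0 for all j and Σ_{j=1}^N v_j = 1, let V ∈ ℝ^{N×N} be the matrix all of whose rows equal v, let η ∈ ℝ^N, let D = diag(η_1,…,η_N), and set M = (1−γ)I_N + γV − D(I_N − V). Then for every y ∈ ℝ^N one has diam(M y) ≤ (1 − erg(M)) · diam(y), and consequently diam(M y) ≤ (1 − γ + 4 max_{i=1:N} |η_i|) · diam(y). -/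
noncomputable section

lemma min_formula (x z : ℝ) : min x z = (x + z - |x - z|) / 2 := by
  rcases le_total x z with h | h
  · rw [min_eq_left h, abs_of_nonpos (by linarith)]; ring
  · rw [min_eq_right h, abs_of_nonneg (by linarith)]; ring

/-- For `M = (1-γ)I_N + γV - D(I_N - V)`, where `V` has all rows equal to a probability
weight vector `v` and `D = diag(η)`, for every `y ∈ ℝ^N` one has
`diam(M y) ≤ (1 - erg M) diam(y)` and consequently
`diam(M y) ≤ (1 - γ + 4 max_i |η_i|) diam(y)`. -/
theorem stmt3 {N : ℕ} (hN : 1 ≤ N) (γ : ℝ) (hγ : γ ∈ Set.Ioo (0:ℝ) 1)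
    (v : Fin N → ℝ) (hv : ∀ j, 0 < v j) (hvsum : ∑ j, v j = 1)
    (η : Fin N → ℝ)
    (V : Matrix (Fin N) (Fin N) ℝ) (hV : ∀ i j, V i j = v j)
    (D : Matrix (Fin N) (Fin N) ℝ) (hD : D = Matrix.diagonal η)
    (M : Matrix (Fin N) (Fin N) ℝ)
    (hM : M = (1 - γ) • (1 : Matrix (Fin N) (Fin N) ℝ) + γ • V - D * (1 - V))
    (y : Fin N → ℝ) :
    vdiam (M.mulVec y) ≤ (1 - erg M) * vdiam y ∧
      vdiam (M.mulVec y) ≤ (1 - γ + 4 * ⨆ i, |η i|) * vdiam y := by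
  have hNe : Nonempty (Fin N) := Fin.pos_iff_nonempty.mp hN
  have bddA : ∀ f : Fin N → ℝ, BddAbove (Set.range f) := fun f => (Set.finite_range f).bddAbove
  have bddB : ∀ f : Fin N → ℝ, BddBelow (Set.range f) := fun f => (Set.finite_range f).bddBelow
  set s := ⨆ i, y i with hs
  set t := ⨅ i, y i with ht
  have hyle : ∀ i, y i ≤ s := fun i => le_ciSup (bddA y) i
  have htle : ∀ i, t ≤ y i := fun i => ciInf_le (bddB y) i
  have hts : t ≤ s := (htle (Classical.arbitrary _)).trans (hyle _)
  -- entries of M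
  have hMe : ∀ i j, M i j = (if j = i then (1 - γ - η i) else 0) + (γ + η i) * v j := by
    intro i j
    subst hM hD
    have : (Matrix.diagonal η * (1 - V)) i j = η i * ((1 : Matrix (Fin N) (Fin N) ℝ) i j - v j) := by
      rw [Matrix.diagonal_mul]
      simp [Matrix.sub_apply, hV]
    simp only [Matrix.sub_apply, Matrix.add_apply, Matrix.smul_apply, this, hV,
      Matrix.one_apply, smul_eq_mul]
    by_cases h : i = j <;> simp [h, eq_comm] <;> ring
  -- row sums of M are 1
  have hrow : ∀ i, ∑ j, M i j = 1 := by
    intro i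
    simp only [hMe]
    rw [Finset.sum_add_distrib, Finset.sum_ite_eq' Finset.univ i, ← Finset.mul_sum, hvsum]
    simp only [Finset.mem_univ, if_true, mul_one]; ring
  -- contraction per pair
  have hpair : ∀ i l, M.mulVec y i - M.mulVec y l
      ≤ (1 - ∑ j, min (M i j) (M l j)) * (s - t) := by
    intro i l
    have h1 : M.mulVec y i - M.mulVec y l
        = ∑ j, (M i j - min (M i j) (M l j)) * y j - ∑ j, (M l j - min (M i j) (M l j)) * y j := by
      simp only [Matrix.mulVec, dotProduct, ← Finset.sum_sub_distrib]
      congr 1; ext j; ring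
    have h2 : ∑ j, (M i j - min (M i j) (M l j)) * y j
        ≤ (1 - ∑ j, min (M i j) (M l j)) * s := by
      have : ∑ j, (M i j - min (M i j) (M l j)) * y j
          ≤ ∑ j, (M i j - min (M i j) (M l j)) * s :=
        Finset.sum_le_sum fun j _ => mul_le_mul_of_nonneg_left (hyle j)
          (by simp [sub_nonneg, min_le_left])
      calc ∑ j, (M i j - min (M i j) (M l j)) * y j
          ≤ ∑ j, (M i j - min (M i j) (M l j)) * s := this
        _ = (1 - ∑ j, min (M i j) (M l j)) * s := by
            rw [← Finset.sum_mul, Finset.sum_sub_distrib, hrow i]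
    have h3 : (1 - ∑ j, min (M i j) (M l j)) * t
        ≤ ∑ j, (M l j - min (M i j) (M l j)) * y j := by
      have : ∑ j, (M l j - min (M i j) (M l j)) * t
          ≤ ∑ j, (M l j - min (M i j) (M l j)) * y j :=
        Finset.sum_le_sum fun j _ => mul_le_mul_of_nonneg_left (htle j)
          (by simp [sub_nonneg, min_le_right])
      calc (1 - ∑ j, min (M i j) (M l j)) * t
          = ∑ j, (M l j - min (M i j) (M l j)) * t := by
            rw [← Finset.sum_mul, Finset.sum_sub_distrib, hrow l]
        _ ≤ _ := this
    rw [h1]; nlinarith [h2, h3]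
  -- erg ≤ each pair sum
  have herg_le : ∀ i l, erg M ≤ ∑ j, min (M i j) (M l j) := by
    intro i l
    refine le_trans (ciInf_le (bddB _) i) (ciInf_le (bddB _) l)
  -- first bound
  have hfirst : vdiam (M.mulVec y) ≤ (1 - erg M) * vdiam y := by
    have hC : ∀ i l, M.mulVec y i - M.mulVec y l ≤ (1 - erg M) * (s - t) := by
      intro i l
      refine (hpair i l).trans ?_
      exact mul_le_mul_of_nonneg_right (by linarith [herg_le i l]) (by linarith)
    have : vdiam y = s - t := rfl
    rw [vdiam, this, sub_le_iff_le_add]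
    refine ciSup_le fun i => ?_
    rw [← sub_le_iff_le_add']
    refine le_ciInf fun l => ?_
    linarith [hC i l]
  refine ⟨hfirst, ?_⟩
  -- second bound
  set m := ⨆ i, |η i| with hm
  have hηm : ∀ i, |η i| ≤ m := by intro i; rw [hm]; exact le_ciSup (bddA fun i => |η i|) i
  have hm0 : 0 ≤ m := le_trans (abs_nonneg _) (hηm (Classical.arbitrary _))
  have herg_ge : γ - 2 * m ≤ erg M := by
    refine le_ciInf fun i => le_ciInf fun l => ?_
    have hT : ∑ j, |M i j - M l j| ≤ 2 * (1 - γ) + 4 * m := by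
      have hperj : ∀ j, |M i j - M l j|
          ≤ (if j = i then |1 - γ - η i| else 0) + (if j = l then |1 - γ - η l| else 0)
            + |η i - η l| * v j := by
        intro j
        have he : M i j - M l j = ((if j = i then (1 - γ - η i) else 0)
            - (if j = l then (1 - γ - η l) else 0)) + (η i - η l) * v j := by
          rw [hMe i j, hMe l j]; ring
        rw [he]
        calc |_ + (η i - η l) * v j| ≤ |(if j = i then (1 - γ - η i) else 0)
              - (if j = l then (1 - γ - η l) else 0)| + |(η i - η l) * v j| := abs_add_le _ _
          _ ≤ _ := by
              gcongr
              · refine (abs_sub _ _).trans ?_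
                gcongr <;> split <;> simp [abs_nonneg]
              · rw [abs_mul, abs_of_nonneg (hv j).le]
      calc ∑ j, |M i j - M l j|
          ≤ ∑ j, ((if j = i then |1 - γ - η i| else 0) + (if j = l then |1 - γ - η l| else 0)
            + |η i - η l| * v j) := Finset.sum_le_sum fun j _ => hperj j
        _ = |1 - γ - η i| + |1 - γ - η l| + |η i - η l| := by
            rw [Finset.sum_add_distrib, Finset.sum_add_distrib,
              Finset.sum_ite_eq' Finset.univ i, Finset.sum_ite_eq' Finset.univ l,
              ← Finset.mul_sum, hvsum]
            simp
        _ ≤ 2 * (1 - γ) + 4 * m := by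
            have h1 : |1 - γ - η i| ≤ (1 - γ) + m := by
              refine (abs_sub _ _).trans ?_
              have := hηm i
              rw [abs_of_nonneg (by linarith [hγ.2] : (0:ℝ) ≤ 1 - γ)]
              linarith
            have h2 : |1 - γ - η l| ≤ (1 - γ) + m := by
              refine (abs_sub _ _).trans ?_
              have := hηm l
              rw [abs_of_nonneg (by linarith [hγ.2] : (0:ℝ) ≤ 1 - γ)]
              linarith
            have h3 : |η i - η l| ≤ 2 * m := by
              refine (abs_sub _ _).trans ?_
              linarith [hηm i, hηm l]
            linarith
    have hmin : ∑ j, min (M i j) (M l j)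
        = (∑ j, M i j + ∑ j, M l j - ∑ j, |M i j - M l j|) / 2 := by
      rw [← Finset.sum_add_distrib, ← Finset.sum_sub_distrib, Finset.sum_div]
      exact Finset.sum_congr rfl fun j _ => min_formula _ _
    rw [hmin, hrow i, hrow l]
    linarith
  have hy0 : 0 ≤ vdiam y := by rw [vdiam]; linarith
  refine hfirst.trans ?_
  exact mul_le_mul_of_nonneg_right (by linarith [herg_ge]) hy0
end
end

section
/- Under the CBO setup, for every s = 1,…,d and every k ∈ ℕ, E[diam(y_k^s)] ≤ θ^k · E[diam(y_0^s)]. -/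
open MeasureTheory ProbabilityTheory
open scoped RealInnerProductSpace

noncomputable section

/-- Data of the discrete consensus-based optimization (CBO) method with noisy objective
function: drift parameter `γ`, noise level `ξ`, weight parameter `α`, particle positions
`x k i : Ω → ℝ^d`, diffusion noises `η k s i : Ω → ℝ`, and the values `fhat k i : Ω → ℝ`
returned by the stochastic oracle (i.e. `f̂(x_k^i, ω_k^i)`). -/
structure CBOData (N d : ℕ) (Ω : Type) [MeasurableSpace Ω] where
  γ : ℝ
  ξ : ℝ
  α : ℝ
  x : ℕ → Fin N → Ω → EuclideanSpace ℝ (Fin d)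
  η : ℕ → Fin d → Fin N → Ω → ℝ
  fhat : ℕ → Fin N → Ω → ℝ

namespace CBOData

variable {N d : ℕ} {Ω : Type} [MeasurableSpace Ω]

/-- The noisy consensus point
`x̂_k^α = (Σ_i x_k^i e^{-α f̂(x_k^i, ω_k^i)}) / (Σ_i e^{-α f̂(x_k^i, ω_k^i)})`. -/
def xhat (C : CBOData N d Ω) (k : ℕ) (ω : Ω) : EuclideanSpace ℝ (Fin d) :=
  (∑ i, Real.exp (-C.α * C.fhat k i ω))⁻¹ •
    ∑ i, Real.exp (-C.α * C.fhat k i ω) • C.x k i ω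

/-- The vector of `s`-th components of the particles: `y_k^s = (x_{k,s}^1, …, x_{k,s}^N)`. -/
def y (C : CBOData N d Ω) (k : ℕ) (s : Fin d) (ω : Ω) : Fin N → ℝ :=
  fun i => C.x k i ω s

/-- The contraction constant `θ = 1 - γ + 8 ξ (log(√2 N))^{1/2}`. -/
def th (C : CBOData N d Ω) : ℝ :=
  1 - C.γ + 8 * C.ξ * Real.sqrt (Real.log (Real.sqrt 2 * N))

/-- The σ-algebra generated by the noises of iteration `k`. -/
def noiseσ (C : CBOData N d Ω) (k : ℕ) : MeasurableSpace Ω :=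
  ⨆ s : Fin d, ⨆ i : Fin N, MeasurableSpace.comap (C.η k s i) inferInstance

/-- The σ-algebra generated by the particle positions and the oracle evaluations up to
iteration `k`, together with the noises of iterations `< k`. -/
def histσ (C : CBOData N d Ω) (k : ℕ) : MeasurableSpace Ω :=
  ((⨆ (l : ℕ) (_ : l ≤ k), ⨆ i : Fin N,
      (MeasurableSpace.comap (C.x l i) inferInstance ⊔
        MeasurableSpace.comap (C.fhat l i) inferInstance)) ⊔
    ⨆ (l : ℕ) (_ : l < k), ⨆ s : Fin d, ⨆ i : Fin N,
      MeasurableSpace.comap (C.η l s i) inferInstance)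

/-- `σ_k`: the σ-algebra generated by `{x_l^i : l ≤ k}` and `{η_{l,s}^i : l ≤ k}`. -/
def sigmak (C : CBOData N d Ω) (k : ℕ) : MeasurableSpace Ω :=
  ((⨆ (l : ℕ) (_ : l ≤ k), ⨆ i : Fin N,
      MeasurableSpace.comap (C.x l i) inferInstance) ⊔
    ⨆ (l : ℕ) (_ : l ≤ k), ⨆ s : Fin d, ⨆ i : Fin N,
      MeasurableSpace.comap (C.η l s i) inferInstance)

/-- The hypotheses of the CBO setup: `N, d ≥ 1`, `γ ∈ (0,1)`, `ξ > 0`, `α > 0`,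
measurability of all the random variables, the noises are i.i.d. centered Gaussian with
variance `ξ²` and, at each iteration `k`, the family of iteration-`k` noises is independent
of the particle positions and oracle evaluations up to iteration `k`; finally the particles
evolve according to the (componentwise) CBO update rule. -/
structure Hyp (C : CBOData N d Ω) (P : Measure Ω) : Prop where
  hN : 1 ≤ N
  hd : 1 ≤ d
  hγ : C.γ ∈ Set.Ioo (0:ℝ) 1
  hξ : 0 < C.ξ
  hα : 0 < C.α
  meas_x : ∀ k i, Measurable (C.x k i)
  meas_η : ∀ k s i, Measurable (C.η k s i)
  meas_fhat : ∀ k i, Measurable (C.fhat k i)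
  η_gauss : ∀ k s i, Measure.map (C.η k s i) P = gaussianReal 0 ⟨C.ξ ^ 2, sq_nonneg C.ξ⟩
  η_iid : iIndepFun
    (fun p : ℕ × Fin d × Fin N => C.η p.1 p.2.1 p.2.2) P
  η_indep_hist : ∀ k, Indep (C.noiseσ k) (C.histσ k) P
  evol : ∀ k i s ω, C.x (k+1) i ω s =
    C.x k i ω s - C.γ * (C.x k i ω s - C.xhat k ω s)
      - (C.x k i ω s - C.xhat k ω s) * C.η k s i ω

end CBOData

/-! Pathwise, one step contracts every coordinate towards the consensus point, which lies between
the smallest and the largest coordinate, so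
`diam y_{k+1}^s ≤ diam y_k^s * (1 - γ + 2 max_i |η_{k,s}^i|)`.
The diameter at step `k` is measurable with respect to the history and the factor with respect to
the fresh noises, so the expectation of the product factorises. Jensen's inequality applied to
`exp (t max_i |η^i|) ≤ Σ_i (exp (t η^i) + exp (-t η^i))` bounds the expected maximum of `N`
centred Gaussians by `2 ξ √(log (√2 N))`, so the expected factor is at most `θ`. -/

open scoped NNReal
open Real Finset Set

section GaussianMaximal

lemma exp_mul_iSup_abs_le_sum {ι : Type*} [Fintype ι] [Nonempty ι] (t : ℝ) (x : ι → ℝ) :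
    exp (t * ⨆ i, |x i|) ≤ ∑ i, (exp (t * x i) + exp (-t * x i)) := by
  obtain ⟨i₀, hi₀⟩ := exists_eq_ciSup_of_finite (f := fun i => |x i|)
  calc exp (t * ⨆ i, |x i|) ≤ exp |t * x i₀| := by
        rw [← hi₀, abs_mul]
        exact exp_le_exp.2 (mul_le_mul_of_nonneg_right (le_abs_self t) (abs_nonneg _))
    _ ≤ exp (t * x i₀) + exp (-t * x i₀) := by rw [neg_mul]; exact exp_abs_le _
    _ ≤ ∑ i, (exp (t * x i) + exp (-t * x i)) :=
        single_le_sum (f := fun i => exp (t * x i) + exp (-t * x i))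
          (fun i _ => by positivity) (mem_univ i₀)

variable {Ω ι : Type*} [MeasurableSpace Ω] {P : Measure Ω} [Fintype ι] [Nonempty ι] {v : ℝ≥0}
  {η : ι → Ω → ℝ}

lemma integrable_iSup_abs_of_map_eq_gaussianReal (hmeas : ∀ i, Measurable (η i))
    (hη : ∀ i, P.map (η i) = gaussianReal 0 v) :
    Integrable (fun ω => ⨆ i, |η i ω|) P := by
  have hint : ∀ i, Integrable (η i) P := fun i =>
    (integrable_map_measure aestronglyMeasurable_id (hmeas i).aemeasurable).1
      (by rw [hη i]; exact (memLp_id_gaussianReal 1).integrable le_rfl)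
  refine (integrable_finsetSum univ fun i _ => (hint i).abs).mono'
    (Measurable.iSup fun i => (hmeas i).abs).aestronglyMeasurable (ae_of_all _ fun ω => ?_)
  rw [norm_of_nonneg ((abs_nonneg _).trans (le_ciSup (f := fun i => |η i ω|)
    (Finite.bddAbove_range _) (Classical.arbitrary ι)))]
  exact ciSup_le fun i => single_le_sum (f := fun i => |η i ω|) (fun i _ => abs_nonneg _)
    (mem_univ i)

lemma integral_iSup_abs_le_of_map_eq_gaussianReal [IsProbabilityMeasure P]
    (hmeas : ∀ i, Measurable (η i)) (hη : ∀ i, P.map (η i) = gaussianReal 0 v)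
    {t : ℝ} (ht : 0 < t) :
    ∫ ω, ⨆ i, |η i ω| ∂P ≤ (log (2 * Fintype.card ι) + v * t ^ 2 / 2) / t := by
  set M := fun ω => ⨆ i, |η i ω|
  have hexp_int : ∀ i (u : ℝ), Integrable (fun ω => exp (u * η i ω)) P := fun i u => by
    rw [← mgf_pos_iff, mgf_gaussianReal (hη i)]; exact exp_pos _
  have hmgf : ∀ i (u : ℝ), ∫ ω, exp (u * η i ω) ∂P = exp (v * u ^ 2 / 2) := fun i u => by
    simpa [mgf] using mgf_gaussianReal (hη i) u
  have hsum_int : Integrable (fun ω => ∑ i, (exp (t * η i ω) + exp (-t * η i ω))) P :=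
    integrable_finsetSum _ fun i _ => (hexp_int i t).add (hexp_int i (-t))
  have hM_int := integrable_iSup_abs_of_map_eq_gaussianReal hmeas hη
  have hexpM_int : Integrable (fun ω => exp (t * M ω)) P :=
    hsum_int.mono'
      ((Measurable.iSup fun i => (hmeas i).abs).const_mul t).exp.aestronglyMeasurable
      (ae_of_all _ fun ω => (norm_of_nonneg (exp_pos _).le).trans_le
        (exp_mul_iSup_abs_le_sum t _))
  have hjensen : exp (∫ ω, t * M ω ∂P) ≤ ∫ ω, exp (t * M ω) ∂P :=
    convexOn_exp.map_integral_le continuous_exp.continuousOn isClosed_univ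
      (ae_of_all _ fun _ => Set.mem_univ _) (hM_int.const_mul t) hexpM_int
  have hmoment : ∫ ω, exp (t * M ω) ∂P ≤ exp (log (2 * Fintype.card ι) + v * t ^ 2 / 2) := by
    calc ∫ ω, exp (t * M ω) ∂P
        ≤ ∫ ω, ∑ i, (exp (t * η i ω) + exp (-t * η i ω)) ∂P :=
          integral_mono hexpM_int hsum_int fun ω => exp_mul_iSup_abs_le_sum t _
      _ = exp (log (2 * Fintype.card ι) + v * t ^ 2 / 2) := by
          rw [integral_finsetSum (f := fun i ω => exp (t * η i ω) + exp (-t * η i ω)) _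
            fun i _ => (hexp_int i t).add (hexp_int i (-t))]
          simp only [integral_add (hexp_int _ t) (hexp_int _ (-t)), hmgf, sum_const, card_univ,
            exp_add, exp_log (by positivity : (0:ℝ) < 2 * Fintype.card ι), nsmul_eq_mul, neg_sq]
          ring
  rw [integral_const_mul] at hjensen
  rw [le_div_iff₀ ht, mul_comm]
  exact exp_le_exp.1 (hjensen.trans hmoment)

end GaussianMaximal

section Diameter

variable {N : ℕ}

lemma sub_le_vdiam (y : Fin N → ℝ) (i j : Fin N) : y i - y j ≤ vdiam y :=
  sub_le_sub (le_ciSup (Finite.bddAbove_range y) i) (ciInf_le (Finite.bddBelow_range y) j)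

lemma vdiam_nonneg (y : Fin N → ℝ) : 0 ≤ vdiam y := by
  rcases isEmpty_or_nonempty (Fin N) with hN | ⟨⟨i⟩⟩
  · simp [vdiam]
  · simpa using sub_le_vdiam y i i

lemma vdiam_le_of_forall_sub_le [Nonempty (Fin N)] {y : Fin N → ℝ} {b : ℝ}
    (h : ∀ i j, y i - y j ≤ b) : vdiam y ≤ b := by
  rw [vdiam, sub_le_iff_le_add]
  refine ciSup_le fun i => ?_
  have : y i - b ≤ ⨅ j, y j := le_ciInf fun j => by linarith [h i j]
  linarith

lemma abs_sub_le_vdiam {y : Fin N → ℝ} {c : ℝ} (hc : c ∈ Icc (⨅ i, y i) (⨆ i, y i))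
    (i : Fin N) : |y i - c| ≤ vdiam y := by
  have hi_le := le_ciSup (Finite.bddAbove_range y) i
  have hle_i := ciInf_le (Finite.bddBelow_range y) i
  rw [abs_le, vdiam]
  constructor <;> linarith [hc.1, hc.2]

lemma measurable_vdiam {Ω : Type*} {m : MeasurableSpace Ω} {y : Ω → Fin N → ℝ}
    (hy : ∀ i, Measurable fun ω => y ω i) : Measurable fun ω => vdiam (y ω) :=
  (Measurable.iSup hy).sub (Measurable.iInf hy)

lemma measurable_vdiam_coord {Ω : Type*} {m : MeasurableSpace Ω} {d : ℕ}
    {x : Fin N → Ω → EuclideanSpace ℝ (Fin d)} (hx : ∀ i, Measurable (x i)) (s : Fin d) :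
    Measurable fun ω => vdiam fun i => x i ω s :=
  measurable_vdiam fun i => (measurable_pi_apply s).comp ((WithLp.measurable_ofLp 2 _).comp (hx i))

lemma vdiam_le_of_update [Nonempty (Fin N)] {y y' e : Fin N → ℝ} {γ c m : ℝ} (hγ : γ ≤ 1)
    (hc : c ∈ Icc (⨅ i, y i) (⨆ i, y i)) (he : ∀ i, |e i| ≤ m)
    (hy' : ∀ i, y' i = y i - γ * (y i - c) - (y i - c) * e i) :
    vdiam y' ≤ vdiam y * (1 - γ + 2 * m) := by
  have hnoise : ∀ i, |(y i - c) * e i| ≤ vdiam y * m := fun i => by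
    rw [abs_mul]
    exact mul_le_mul (abs_sub_le_vdiam hc i) (he i) (abs_nonneg _) (vdiam_nonneg y)
  refine vdiam_le_of_forall_sub_le fun i j => ?_
  have hdrift : (1 - γ) * (y i - y j) ≤ (1 - γ) * vdiam y :=
    mul_le_mul_of_nonneg_left (sub_le_vdiam y i j) (sub_nonneg.2 hγ)
  rw [hy' i, hy' j]
  linarith [neg_abs_le ((y i - c) * e i), le_abs_self ((y j - c) * e j), hnoise i, hnoise j]

end Diameter

namespace CBOData

variable {N d : ℕ} {Ω : Type} [MeasurableSpace Ω] {C : CBOData N d Ω} {P : Measure Ω}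

lemma xhat_apply (C : CBOData N d Ω) (k : ℕ) (ω : Ω) (s : Fin d) :
    C.xhat k ω s = univ.centerMass (fun i => exp (-C.α * C.fhat k i ω)) (C.y k s ω) := by
  simp [xhat, centerMass, y]

lemma xhat_apply_mem_Icc [Nonempty (Fin N)] (C : CBOData N d Ω) (k : ℕ) (ω : Ω) (s : Fin d) :
    C.xhat k ω s ∈ Icc (⨅ i, C.y k s ω i) (⨆ i, C.y k s ω i) := by
  have hw : 0 < ∑ i, exp (-C.α * C.fhat k i ω) := sum_pos (fun i _ => exp_pos _) univ_nonempty
  rw [xhat_apply, ← inf'_univ_eq_ciInf, ← sup'_univ_eq_ciSup]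
  exact ⟨inf_le_centerMass (fun i _ => (exp_pos _).le) hw,
    centerMass_le_sup (fun i _ => (exp_pos _).le) hw⟩

lemma Hyp.vdiam_y_succ_le (hC : C.Hyp P) (k : ℕ) (s : Fin d) (ω : Ω) :
    vdiam (C.y (k + 1) s ω) ≤ vdiam (C.y k s ω) * (1 - C.γ + 2 * ⨆ i, |C.η k s i ω|) :=
  have : Nonempty (Fin N) := Fin.pos_iff_nonempty.1 hC.hN
  vdiam_le_of_update hC.hγ.2.le (C.xhat_apply_mem_Icc k ω s)
    (fun i => le_ciSup (f := fun i => |C.η k s i ω|) (Finite.bddAbove_range _) i)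
    (fun i => hC.evol k i s ω)

lemma measurable_x_histσ (C : CBOData N d Ω) (k : ℕ) (i : Fin N) :
    Measurable[C.histσ k] (C.x k i) :=
  measurable_iff_comap_le.2 <| le_sup_of_le_left <| le_iSup₂_of_le k le_rfl <|
    le_iSup_of_le i le_sup_left

lemma measurable_η_noiseσ (C : CBOData N d Ω) (k : ℕ) (s : Fin d) (i : Fin N) :
    Measurable[C.noiseσ k] (C.η k s i) :=
  measurable_iff_comap_le.2 <| le_iSup₂_of_le s i le_rfl

lemma Hyp.indepFun_vdiam_y_iSup_abs_η (hC : C.Hyp P) (k : ℕ) (s : Fin d) :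
    IndepFun (fun ω => vdiam (C.y k s ω)) (fun ω => ⨆ i, |C.η k s i ω|) P := by
  have hD := measurable_iff_comap_le.1 (measurable_vdiam_coord (C.measurable_x_histσ k) s)
  have hM := measurable_iff_comap_le.1
    (Measurable.iSup fun i => measurable_abs.comp (C.measurable_η_noiseσ k s i))
  rw [IndepFun_iff_Indep]
  exact indep_of_indep_of_le_right (indep_of_indep_of_le_left (hC.η_indep_hist k).symm hD) hM

lemma Hyp.th_nonneg (hC : C.Hyp P) : 0 ≤ C.th := by
  have := hC.hγ.2
  have : 0 ≤ 8 * C.ξ * √(log (√2 * N)) := mul_nonneg (by linarith [hC.hξ]) (sqrt_nonneg _)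
  rw [th]
  linarith

lemma Hyp.integral_iSup_abs_η_le [IsProbabilityMeasure P] (hC : C.Hyp P) (k : ℕ) (s : Fin d) :
    ∫ ω, ⨆ i, |C.η k s i ω| ∂P ≤ 2 * C.ξ * √(log (√2 * N)) := by
  have : Nonempty (Fin N) := Fin.pos_iff_nonempty.1 hC.hN
  have hN : (1 : ℝ) ≤ N := by exact_mod_cast hC.hN
  set L := log (√2 * N)
  have hL : 0 < L := log_pos (by nlinarith [one_lt_sqrt_two])
  have hlog : log (2 * N) ≤ 2 * L := by
    rw [show 2 * L = log ((√2 * N) ^ 2) by rw [log_pow]; norm_num [L], mul_pow,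
      sq_sqrt zero_le_two]
    exact log_le_log (by positivity) (by nlinarith)
  have hu : 0 < √L := sqrt_pos.2 hL
  have hξ := hC.hξ
  -- the Chernoff parameter `t = 2 √L / ξ` makes the bound `2 ξ √L`
  refine (integral_iSup_abs_le_of_map_eq_gaussianReal (hC.meas_η k s) (hC.η_gauss k s)
    (t := 2 * √L / C.ξ) (by positivity)).trans ?_
  rw [Fintype.card_fin, div_le_iff₀ (by positivity)]
  change log (2 * N) + C.ξ ^ 2 * (2 * √L / C.ξ) ^ 2 / 2 ≤ _
  have hsq := sq_sqrt hL.le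
  field_simp
  nlinarith

lemma Hyp.integral_vdiam_y_succ_le [IsProbabilityMeasure P] (hC : C.Hyp P) {k : ℕ} {s : Fin d}
    (hint : Integrable (fun ω => vdiam (C.y k s ω)) P) :
    Integrable (fun ω => vdiam (C.y (k + 1) s ω)) P ∧
      ∫ ω, vdiam (C.y (k + 1) s ω) ∂P ≤ C.th * ∫ ω, vdiam (C.y k s ω) ∂P := by
  have : Nonempty (Fin N) := Fin.pos_iff_nonempty.1 hC.hN
  set G := fun ω => 1 - C.γ + 2 * ⨆ i, |C.η k s i ω|
  have hM_int := integrable_iSup_abs_of_map_eq_gaussianReal (hC.meas_η k s) (hC.η_gauss k s)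
  have hG_int : Integrable G P := (integrable_const _).add (hM_int.const_mul 2)
  have hindep : IndepFun (fun ω => vdiam (C.y k s ω)) G P :=
    (hC.indepFun_vdiam_y_iSup_abs_η k s).comp measurable_id
      (measurable_const.add (measurable_const.mul measurable_id))
  have hDG_int := hindep.integrable_mul hint hG_int
  have hG_le : ∫ ω, G ω ∂P ≤ C.th := by
    have := hC.integral_iSup_abs_η_le k s
    have : 0 ≤ C.ξ * √(log (√2 * N)) := mul_nonneg hC.hξ.le (sqrt_nonneg _)
    rw [integral_add (integrable_const _) (hM_int.const_mul 2), integral_const,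
      integral_const_mul, probReal_univ, one_smul, th]
    linarith
  have hint_succ : Integrable (fun ω => vdiam (C.y (k + 1) s ω)) P :=
    hDG_int.mono' (measurable_vdiam_coord (hC.meas_x (k + 1)) s).aestronglyMeasurable
      (ae_of_all _ fun ω =>
        (norm_of_nonneg (vdiam_nonneg _)).trans_le (hC.vdiam_y_succ_le k s ω))
  refine ⟨hint_succ, ?_⟩
  calc ∫ ω, vdiam (C.y (k + 1) s ω) ∂P
      ≤ ∫ ω, vdiam (C.y k s ω) * G ω ∂P :=
        integral_mono hint_succ hDG_int (hC.vdiam_y_succ_le k s)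
    _ = (∫ ω, vdiam (C.y k s ω) ∂P) * ∫ ω, G ω ∂P :=
        hindep.integral_mul_eq_mul_integral hint.aestronglyMeasurable hG_int.aestronglyMeasurable
    _ ≤ (∫ ω, vdiam (C.y k s ω) ∂P) * C.th :=
        mul_le_mul_of_nonneg_left hG_le (integral_nonneg fun ω => vdiam_nonneg _)
    _ = C.th * ∫ ω, vdiam (C.y k s ω) ∂P := mul_comm _ _

end CBOData

/-- Under the CBO setup, for every component `s` and iteration `k`,
`E[diam(y_k^s)] ≤ θ^k E[diam(y_0^s)]`. -/
theorem stmt5 {N d : ℕ} {Ω : Type} [MeasurableSpace Ω] (P : Measure Ω)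
    [IsProbabilityMeasure P] (C : CBOData N d Ω) (hC : C.Hyp P)
    (hint : ∀ s : Fin d, Integrable (fun ω => vdiam (C.y 0 s ω)) P)
    (s : Fin d) (k : ℕ) :
    ∫ ω, vdiam (C.y k s ω) ∂P ≤ C.th ^ k * ∫ ω, vdiam (C.y 0 s ω) ∂P := by
  suffices h : Integrable (fun ω => vdiam (C.y k s ω)) P ∧
      ∫ ω, vdiam (C.y k s ω) ∂P ≤ C.th ^ k * ∫ ω, vdiam (C.y 0 s ω) ∂P from h.2
  induction k with
  | zero => simpa using hint s
  | succ k ih =>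
    obtain ⟨hint_succ, hle_succ⟩ := hC.integral_vdiam_y_succ_le ih.1
    refine ⟨hint_succ, hle_succ.trans ?_⟩
    rw [pow_succ', mul_assoc]
    exact mul_le_mul_of_nonneg_left ih.2 hC.th_nonneg
end
end

section
/- Let f : ℝ^d → ℝ be continuous and strictly positive, with a unique global minimizer x* and f_* = f(x*), and suppose there exist constants f_∞, R_0, β, ν > 0 such that (f(x) − f_*)^ν ≥ β‖x − x*‖ for every x with ‖x − x*‖ ≤ R_0, and f(x) ≥ f_* + f_∞ for every x with ‖x − x*‖ > R_0. Let x^1,…,x^N ∈ ℝ^d, α > 0, and x^α = (Σ_{i=1}^N x^i e^{−α f(x^i)}) / (Σ_{i=1}^N e^{−α f(x^i)}). Let r ∈ (0, R_0] and q > 0 satisfy q + f_r ≤ f_∞, where f_r = max_{‖x − x*‖ ≤ r} f(x), and let I_r = {i ∈ {1,…,N} : ‖x^i − x*‖ ≤ r}. If |I_r| > 0, then ‖x^α − x*‖ ≤ (1/β)(q + f_r)^ν + (e^{−α q} / |I_r|) Σ_{i=1}^N ‖x^i − x*‖. -/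
noncomputable section

set_option maxHeartbeats 1000000

/-- Quantitative Laplace principle, case `|I_r| > 0`: under the growth conditions on `f`
around its unique global minimizer `x*`, for `r ∈ (0, R_0]` and `q > 0` with
`q + f_r ≤ f_∞` (`f_r = max_{‖x-x*‖ ≤ r} f`), if at least one particle lies in the ball of
radius `r` around `x*`, then the consensus point `x^α` satisfies
`‖x^α - x*‖ ≤ (1/β)(q + f_r)^ν + (e^{-αq}/|I_r|) Σ_i ‖x^i - x*‖`. -/
theorem stmt17 {d N : ℕ} (hN : 1 ≤ N)
    (f : EuclideanSpace ℝ (Fin d) → ℝ) (hfc : Continuous f) (hfpos : ∀ x, 0 < f x)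
    (xstar : EuclideanSpace ℝ (Fin d)) (hmin : ∀ x, f xstar ≤ f x)
    (huniq : ∀ x, f x = f xstar → x = xstar)
    (finf R0 β ν : ℝ) (hfinf : 0 < finf) (hR0 : 0 < R0) (hβ : 0 < β) (hν : 0 < ν)
    (hgrow : ∀ x, ‖x - xstar‖ ≤ R0 → β * ‖x - xstar‖ ≤ (f x - f xstar) ^ ν)
    (hfar : ∀ x, R0 < ‖x - xstar‖ → f xstar + finf ≤ f x)
    (xs : Fin N → EuclideanSpace ℝ (Fin d)) (α : ℝ) (hα : 0 < α)
    (xα : EuclideanSpace ℝ (Fin d))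
    (hxα : xα = (∑ i, Real.exp (-α * f (xs i)))⁻¹ •
      ∑ i, Real.exp (-α * f (xs i)) • xs i)
    (r q : ℝ) (hr : r ∈ Set.Ioc (0:ℝ) R0) (hq : 0 < q)
    (fr : ℝ) (hfr : fr = sSup (f '' Metric.closedBall xstar r))
    (hqfr : q + fr ≤ finf)
    (I : Finset (Fin N))
    (hI : I = Finset.univ.filter (fun i => ‖xs i - xstar‖ ≤ r))
    (hIpos : 0 < I.card) :
    ‖xα - xstar‖ ≤ (1 / β) * (q + fr) ^ ν +
      (Real.exp (-α * q) / I.card) * ∑ i, ‖xs i - xstar‖ := by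
  have hNne : Nonempty (Fin N) := ⟨⟨0, hN⟩⟩
  -- `fr` bounds `f` on the ball of radius `r`
  have hfrge : ∀ x : EuclideanSpace ℝ (Fin d), ‖x - xstar‖ ≤ r → f x ≤ fr := by
    intro x hx
    rw [hfr]
    refine le_csSup ((isCompact_closedBall xstar r).image hfc).bddAbove ?_
    exact ⟨x, by simpa [Metric.mem_closedBall, dist_eq_norm] using hx, rfl⟩
  have hfrstar : f xstar ≤ fr := hfrge xstar (by simpa using hr.1.le)
  have hfstar : 0 < f xstar := hfpos xstar
  set w : Fin N → ℝ := fun i => Real.exp (-α * f (xs i)) with hw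
  have hwpos : ∀ i, 0 < w i := fun i => Real.exp_pos _
  set W : ℝ := ∑ i, w i with hWdef
  have hWpos : 0 < W := Finset.sum_pos (fun i _ => hwpos i) Finset.univ_nonempty
  -- lower bound on W
  have hIcard : (0:ℝ) < I.card := by exact_mod_cast hIpos
  have hWlow : (I.card : ℝ) * Real.exp (-α * fr) ≤ W := by
    have h1 : ∀ i ∈ I, Real.exp (-α * fr) ≤ w i := by
      intro i hi
      have hir : ‖xs i - xstar‖ ≤ r := by
        rw [hI] at hi
        simpa using (Finset.mem_filter.mp hi).2
      have hfi : f (xs i) ≤ fr := hfrge _ hir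
      exact Real.exp_le_exp.mpr (by nlinarith)
    calc (I.card : ℝ) * Real.exp (-α * fr) = ∑ _i ∈ I, Real.exp (-α * fr) := by
          rw [Finset.sum_const, nsmul_eq_mul]
      _ ≤ ∑ i ∈ I, w i := Finset.sum_le_sum h1
      _ ≤ W := Finset.sum_le_sum_of_subset_of_nonneg (Finset.subset_univ I)
            (fun i _ _ => (hwpos i).le)
  -- the consensus displacement
  have hxd : xα - xstar = W⁻¹ • ∑ i, w i • (xs i - xstar) := by
    have h1 : ∑ i, w i • (xs i - xstar) = (∑ i, w i • xs i) - W • xstar := by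
      simp [smul_sub, Finset.sum_sub_distrib, hWdef, Finset.sum_smul]
    rw [h1, smul_sub, smul_smul, inv_mul_cancel₀ hWpos.ne', one_smul, hxα]
  have key : ‖xα - xstar‖ ≤ W⁻¹ * ∑ i, w i * ‖xs i - xstar‖ := by
    rw [hxd, norm_smul, Real.norm_eq_abs, abs_of_pos (inv_pos.2 hWpos)]
    refine mul_le_mul_of_nonneg_left ?_ (inv_pos.2 hWpos).le
    refine (norm_sum_le _ _).trans (le_of_eq ?_)
    refine Finset.sum_congr rfl fun i _ => ?_
    rw [norm_smul, Real.norm_eq_abs, abs_of_pos (hwpos i)]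
  set S : ℝ := ∑ i, ‖xs i - xstar‖ with hS
  have hSnn : 0 ≤ S := Finset.sum_nonneg fun i _ => norm_nonneg _
  set M : ℝ := (1 / β) * (q + fr) ^ ν with hM
  have hqfr0 : 0 ≤ q + fr := by nlinarith
  have hMnn : 0 ≤ M := by
    have := Real.rpow_nonneg hqfr0 ν
    positivity
  set A : Finset (Fin N) := Finset.univ.filter (fun i => f (xs i) - f xstar < q + fr)
    with hA
  -- particles in A are close to xstar
  have hAle : ∀ i ∈ A, ‖xs i - xstar‖ ≤ M := by
    intro i hi
    have hlt : f (xs i) - f xstar < q + fr := by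
      have := Finset.mem_filter.mp hi
      simpa using this.2
    have hball : ‖xs i - xstar‖ ≤ R0 := by
      by_contra h
      push_neg at h
      have := hfar _ h
      linarith
    have h1 := hgrow _ hball
    have h2 : (f (xs i) - f xstar) ^ ν ≤ (q + fr) ^ ν :=
      Real.rpow_le_rpow (sub_nonneg.2 (hmin _)) hlt.le hν.le
    rw [hM]
    rw [div_mul_eq_mul_div, one_mul, le_div_iff₀ hβ]
    nlinarith
  -- particles outside A have small weight
  have hAc : ∀ i ∈ Aᶜ, w i ≤ Real.exp (-α * (f xstar + q + fr)) := by
    intro i hi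
    have hnm : i ∉ A := Finset.mem_compl.mp hi
    rw [hA, Finset.mem_filter] at hnm
    push_neg at hnm
    have hge : q + fr ≤ f (xs i) - f xstar := hnm (Finset.mem_univ i)
    exact Real.exp_le_exp.mpr (by nlinarith)
  -- split the sum
  have hsplit : ∑ i, w i * ‖xs i - xstar‖
      = ∑ i ∈ A, w i * ‖xs i - xstar‖ + ∑ i ∈ Aᶜ, w i * ‖xs i - xstar‖ :=
    (Finset.sum_add_sum_compl A _).symm
  -- first piece
  have p1 : W⁻¹ * ∑ i ∈ A, w i * ‖xs i - xstar‖ ≤ M := by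
    have h1 : ∑ i ∈ A, w i * ‖xs i - xstar‖ ≤ W * M := by
      calc ∑ i ∈ A, w i * ‖xs i - xstar‖ ≤ ∑ i ∈ A, w i * M :=
            Finset.sum_le_sum fun i hi =>
              mul_le_mul_of_nonneg_left (hAle i hi) (hwpos i).le
        _ = (∑ i ∈ A, w i) * M := by rw [Finset.sum_mul]
        _ ≤ W * M := mul_le_mul_of_nonneg_right
              (Finset.sum_le_sum_of_subset_of_nonneg (Finset.subset_univ A)
                fun i _ _ => (hwpos i).le) hMnn
    calc W⁻¹ * ∑ i ∈ A, w i * ‖xs i - xstar‖ ≤ W⁻¹ * (W * M) :=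
          mul_le_mul_of_nonneg_left h1 (inv_pos.2 hWpos).le
      _ = M := by field_simp
  -- second piece
  have p2 : W⁻¹ * ∑ i ∈ Aᶜ,
      w i * ‖xs i - xstar‖ ≤ (Real.exp (-α * q) / I.card) * S := by
    have h2 : ∑ i ∈ Aᶜ,
        w i * ‖xs i - xstar‖ ≤ Real.exp (-α * (f xstar + q + fr)) * S := by
      calc ∑ i ∈ Aᶜ, w i * ‖xs i - xstar‖
          ≤ ∑ i ∈ Aᶜ, Real.exp (-α * (f xstar + q + fr)) * ‖xs i - xstar‖ :=
            Finset.sum_le_sum fun i hi =>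
              mul_le_mul_of_nonneg_right (hAc i hi) (norm_nonneg _)
        _ = Real.exp (-α * (f xstar + q + fr)) * ∑ i ∈ Aᶜ,
              ‖xs i - xstar‖ := by rw [Finset.mul_sum]
        _ ≤ Real.exp (-α * (f xstar + q + fr)) * S :=
            mul_le_mul_of_nonneg_left
              (Finset.sum_le_sum_of_subset_of_nonneg (Finset.subset_univ Aᶜ)
                (fun i _ _ => norm_nonneg _)) (Real.exp_pos _).le
    have hWinv : W⁻¹ ≤ ((I.card : ℝ) * Real.exp (-α * fr))⁻¹ := by
      apply inv_anti₀ (by positivity) hWlow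
    have h3 : W⁻¹ * ∑ i ∈ Aᶜ, w i * ‖xs i - xstar‖
        ≤ ((I.card : ℝ) * Real.exp (-α * fr))⁻¹ *
          (Real.exp (-α * (f xstar + q + fr)) * S) := by
      apply mul_le_mul hWinv h2
        (Finset.sum_nonneg fun i _ => mul_nonneg (hwpos i).le (norm_nonneg _))
        (by positivity)
    refine h3.trans ?_
    have hexp : Real.exp (-α * (f xstar + q + fr))
        = Real.exp (-α * (f xstar + q)) * Real.exp (-α * fr) := by
      rw [← Real.exp_add]; ring_nf
    have heq : ((I.card : ℝ) * Real.exp (-α * fr))⁻¹ *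
        (Real.exp (-α * (f xstar + q + fr)) * S)
        = (Real.exp (-α * (f xstar + q)) / I.card) * S := by
      rw [hexp]
      field_simp
    rw [heq]
    have hle : Real.exp (-α * (f xstar + q)) ≤ Real.exp (-α * q) :=
      Real.exp_le_exp.mpr (by nlinarith)
    apply mul_le_mul_of_nonneg_right _ hSnn
    exact div_le_div_of_nonneg_right hle hIcard.le |>.trans_eq rfl
  calc ‖xα - xstar‖ ≤ W⁻¹ * ∑ i, w i * ‖xs i - xstar‖ := key
    _ = W⁻¹ * ∑ i ∈ A, w i * ‖xs i - xstar‖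
        + W⁻¹ * ∑ i ∈ Aᶜ, w i * ‖xs i - xstar‖ := by rw [hsplit]; ring
    _ ≤ M + (Real.exp (-α * q) / I.card) * S := add_le_add p1 p2
end
end

section
/- Let f : ℝ^d → ℝ be continuous and strictly positive, with a unique global minimizer x* and f_* = f(x*), and suppose there exist constants f_∞, R_0, β, ν > 0 such that (f(x) − f_*)^ν ≥ β‖x − x*‖ for every x with ‖x − x*‖ ≤ R_0, and f(x) ≥ f_* + f_∞ for every x with ‖x − x*‖ > R_0. Let x^1,…,x^N ∈ ℝ^d, α > 0, and x^α = (Σ_{i=1}^N x^i e^{−α f(x^i)}) / (Σ_{i=1}^N e^{−α f(x^i)}). Let r ∈ (0, R_0] and q > 0 satisfy q + f_r ≤ f_∞, where f_r = max_{‖x − x*‖ ≤ r} f(x), and let I_r = {i ∈ {1,…,N} : ‖x^i − x*‖ ≤ r}. If |I_r| = 0, then ‖x^α − x*‖ ≤ (1/β)(q + f_r)^ν + e^{−α q} e^{α max_{i=1:N} f(x^i)} (1/N) Σ_{i=1}^N ‖x^i − x*‖. -/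
noncomputable section

/-- Quantitative Laplace principle, case `|I_r| = 0`: under the growth conditions on `f`
around its unique global minimizer `x*`, for `r ∈ (0, R_0]` and `q > 0` with
`q + f_r ≤ f_∞` (`f_r = max_{‖x-x*‖ ≤ r} f`), if no particle lies in the ball of
radius `r` around `x*`, then the consensus point `x^α` still satisfies
`‖x^α - x*‖ ≤ (1/β)(q + f_r)^ν + e^{-αq} e^{α max_i f(x^i)} (1/N) Σ_i ‖x^i - x*‖`. -/
theorem stmt18 {d N : ℕ} (hN : 1 ≤ N)
    (f : EuclideanSpace ℝ (Fin d) → ℝ) (hfc : Continuous f) (hfpos : ∀ x, 0 < f x)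
    (xstar : EuclideanSpace ℝ (Fin d)) (hmin : ∀ x, f xstar ≤ f x)
    (huniq : ∀ x, f x = f xstar → x = xstar)
    (finf R0 β ν : ℝ) (hfinf : 0 < finf) (hR0 : 0 < R0) (hβ : 0 < β) (hν : 0 < ν)
    (hgrow : ∀ x, ‖x - xstar‖ ≤ R0 → β * ‖x - xstar‖ ≤ (f x - f xstar) ^ ν)
    (hfar : ∀ x, R0 < ‖x - xstar‖ → f xstar + finf ≤ f x)
    (xs : Fin N → EuclideanSpace ℝ (Fin d)) (α : ℝ) (hα : 0 < α)
    (xα : EuclideanSpace ℝ (Fin d))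
    (hxα : xα = (∑ i, Real.exp (-α * f (xs i)))⁻¹ •
      ∑ i, Real.exp (-α * f (xs i)) • xs i)
    (r q : ℝ) (hr : r ∈ Set.Ioc (0:ℝ) R0) (hq : 0 < q)
    (fr : ℝ) (hfr : fr = sSup (f '' Metric.closedBall xstar r))
    (hqfr : q + fr ≤ finf)
    (I : Finset (Fin N))
    (hI : I = Finset.univ.filter (fun i => ‖xs i - xstar‖ ≤ r))
    (hIzero : I.card = 0) :
    ‖xα - xstar‖ ≤ (1 / β) * (q + fr) ^ ν +
      Real.exp (-α * q) * Real.exp (α * ⨆ i, f (xs i)) *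
        ((1 / N : ℝ) * ∑ i, ‖xs i - xstar‖) := by
  have hne : Nonempty (Fin N) := Fin.pos_iff_nonempty.mp hN
  set E : Fin N → ℝ := fun i => Real.exp (-α * f (xs i)) with hE
  have hEpos : ∀ i, 0 < E i := fun i => Real.exp_pos _
  set S : ℝ := ∑ i, E i with hS
  have hSpos : 0 < S := Finset.sum_pos (fun i _ => hEpos i) Finset.univ_nonempty
  have hfstar : 0 < f xstar := hfpos xstar
  have hfrge : f xstar ≤ fr := by
    rw [hfr]
    exact le_csSup ((isCompact_closedBall xstar r).image hfc).bddAbove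
      ⟨xstar, Metric.mem_closedBall_self hr.1.le, rfl⟩
  have hqfrpos : 0 < q + fr := by linarith
  set M : ℝ := ⨆ i, f (xs i) with hM
  have hMle : ∀ i, f (xs i) ≤ M :=
    fun i => le_ciSup (Set.Finite.bddAbove (Set.finite_range fun j => f (xs j))) i
  have key : xα - xstar = ∑ i, (S⁻¹ * E i) • (xs i - xstar) := by
    have e1 : S⁻¹ • (∑ i, E i • xs i) = ∑ i, (S⁻¹ * E i) • xs i := by
      rw [Finset.smul_sum]
      exact Finset.sum_congr rfl fun i _ => (mul_smul _ _ _).symm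
    have e2 : (S⁻¹ * S) • xstar = ∑ i, (S⁻¹ * E i) • xstar := by
      rw [← Finset.sum_smul, ← Finset.mul_sum, ← hS]
    have h1 : ∑ i, (S⁻¹ * E i) • (xs i - xstar)
        = S⁻¹ • (∑ i, E i • xs i) - (S⁻¹ * S) • xstar := by
      rw [e1, e2, ← Finset.sum_sub_distrib]
      exact Finset.sum_congr rfl fun i _ => smul_sub _ _ _
    rw [hxα, h1, inv_mul_cancel₀ hSpos.ne', one_smul]
  have hnorm : ‖xα - xstar‖ ≤ ∑ i, (S⁻¹ * E i) * ‖xs i - xstar‖ := by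
    rw [key]
    refine (norm_sum_le _ _).trans (le_of_eq ?_)
    refine Finset.sum_congr rfl fun i _ => ?_
    rw [norm_smul, Real.norm_eq_abs,
      abs_of_pos (mul_pos (inv_pos.mpr hSpos) (hEpos i))]
  have hC1 : (0:ℝ) ≤ (1 / β) * (q + fr) ^ ν :=
    mul_nonneg (le_of_lt (div_pos one_pos hβ)) (Real.rpow_nonneg hqfrpos.le _)
  have hbound1 : ∀ i, f (xs i) ≤ q + fr →
      ‖xs i - xstar‖ ≤ (1 / β) * (q + fr) ^ ν := by
    intro i hi
    have hR : ‖xs i - xstar‖ ≤ R0 := by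
      by_contra h
      have := hfar (xs i) (lt_of_not_ge h)
      linarith
    have h1 : β * ‖xs i - xstar‖ ≤ (f (xs i) - f xstar) ^ ν := hgrow _ hR
    have h2 : (f (xs i) - f xstar) ^ ν ≤ (q + fr) ^ ν :=
      Real.rpow_le_rpow (sub_nonneg.mpr (hmin _)) (by linarith) hν.le
    rw [one_div_mul_eq_div, le_div_iff₀ hβ, mul_comm]
    linarith
  have hbound2 : ∀ i, q + fr < f (xs i) →
      S⁻¹ * E i ≤ Real.exp (-α * q) * Real.exp (α * M) * (1 / N) := by
    intro i hi
    have hNpos : (0:ℝ) < N := by exact_mod_cast hN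
    have hEle : E i ≤ Real.exp (-α * q) := by
      apply Real.exp_le_exp.mpr
      have : q ≤ f (xs i) := by linarith
      nlinarith
    have hSge : (N : ℝ) * Real.exp (-α * M) ≤ S := by
      calc (N : ℝ) * Real.exp (-α * M)
          = ∑ _i : Fin N, Real.exp (-α * M) := by
            rw [Finset.sum_const, Finset.card_univ, Fintype.card_fin, nsmul_eq_mul]
        _ ≤ ∑ i, E i := by
            refine Finset.sum_le_sum fun j _ => ?_
            apply Real.exp_le_exp.mpr
            nlinarith [hMle j]
    have hSinv : S⁻¹ ≤ Real.exp (α * M) * (1 / N) := by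
      have h0 : (0:ℝ) < (N:ℝ) * Real.exp (-α * M) := by positivity
      calc S⁻¹ ≤ ((N:ℝ) * Real.exp (-α * M))⁻¹ := inv_anti₀ h0 hSge
        _ = Real.exp (α * M) * (1 / N) := by
            rw [mul_inv, show -α * M = -(α * M) by ring, Real.exp_neg, inv_inv,
              one_div, mul_comm]
    calc S⁻¹ * E i ≤ (Real.exp (α * M) * (1 / N)) * Real.exp (-α * q) :=
        mul_le_mul hSinv hEle (hEpos i).le (by positivity)
      _ = Real.exp (-α * q) * Real.exp (α * M) * (1 / N) := by ring
  set A : Finset (Fin N) := Finset.univ.filter (fun i => f (xs i) ≤ q + fr) with hA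
  have hsplit : ∑ i, (S⁻¹ * E i) * ‖xs i - xstar‖ =
      ∑ i ∈ A, (S⁻¹ * E i) * ‖xs i - xstar‖ +
      ∑ i ∈ Finset.univ.filter (fun i => ¬ f (xs i) ≤ q + fr),
        (S⁻¹ * E i) * ‖xs i - xstar‖ :=
    (Finset.sum_filter_add_sum_filter_not _ _ _).symm
  have hA1 : ∑ i ∈ A, (S⁻¹ * E i) * ‖xs i - xstar‖ ≤ (1 / β) * (q + fr) ^ ν := by
    calc ∑ i ∈ A, (S⁻¹ * E i) * ‖xs i - xstar‖
        ≤ ∑ i ∈ A, (S⁻¹ * E i) * ((1 / β) * (q + fr) ^ ν) := by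
          refine Finset.sum_le_sum fun i hi => ?_
          exact mul_le_mul_of_nonneg_left
            (hbound1 i (by simpa [hA] using (Finset.mem_filter.mp hi).2))
            (mul_pos (inv_pos.mpr hSpos) (hEpos i)).le
      _ = (S⁻¹ * ∑ i ∈ A, E i) * ((1 / β) * (q + fr) ^ ν) := by
          rw [← Finset.sum_mul, Finset.mul_sum]
      _ ≤ 1 * ((1 / β) * (q + fr) ^ ν) := by
          refine mul_le_mul_of_nonneg_right ?_ hC1
          rw [← inv_mul_cancel₀ hSpos.ne']
          refine mul_le_mul_of_nonneg_left ?_ (inv_nonneg.mpr hSpos.le)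
          exact Finset.sum_le_sum_of_subset_of_nonneg (Finset.subset_univ _)
            (fun j _ _ => (hEpos j).le)
      _ = (1 / β) * (q + fr) ^ ν := one_mul _
  have hA2 : ∑ i ∈ Finset.univ.filter (fun i => ¬ f (xs i) ≤ q + fr),
        (S⁻¹ * E i) * ‖xs i - xstar‖ ≤
      Real.exp (-α * q) * Real.exp (α * M) * ((1 / N : ℝ) * ∑ i, ‖xs i - xstar‖) := by
    calc ∑ i ∈ Finset.univ.filter (fun i => ¬ f (xs i) ≤ q + fr),
          (S⁻¹ * E i) * ‖xs i - xstar‖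
        ≤ ∑ i ∈ Finset.univ.filter (fun i => ¬ f (xs i) ≤ q + fr),
          (Real.exp (-α * q) * Real.exp (α * M) * (1 / N)) * ‖xs i - xstar‖ := by
          refine Finset.sum_le_sum fun i hi => ?_
          exact mul_le_mul_of_nonneg_right
            (hbound2 i (lt_of_not_ge (by simpa using (Finset.mem_filter.mp hi).2)))
            (norm_nonneg _)
      _ ≤ ∑ i, (Real.exp (-α * q) * Real.exp (α * M) * (1 / N)) * ‖xs i - xstar‖ :=
          Finset.sum_le_sum_of_subset_of_nonneg (Finset.subset_univ _)
            (fun j _ _ => by positivity)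
      _ = Real.exp (-α * q) * Real.exp (α * M) * ((1 / N : ℝ) * ∑ i, ‖xs i - xstar‖) := by
          rw [← Finset.mul_sum]; ring
  calc ‖xα - xstar‖ ≤ ∑ i, (S⁻¹ * E i) * ‖xs i - xstar‖ := hnorm
    _ = _ := hsplit
    _ ≤ (1 / β) * (q + fr) ^ ν +
        Real.exp (-α * q) * Real.exp (α * M) * ((1 / N : ℝ) * ∑ i, ‖xs i - xstar‖) :=
        add_le_add hA1 hA2
end
end
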